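/- arXiv:math/0608377 — 4 statements merged into one kernel-verified Lean document; each statement's English description precedes it below -/
import Mathlib

section
/- If R is a semiperfect ring, then every idempotent of R lifts modulo the Jacobson radical, and R/rad(R) is semisimple; conversely, a ring R with R/rad(R) semisimple such that idempotents lift modulo rad(R) decomposes as a left module into a finite direct sum R = Re₁ ⊕ ⋯ ⊕ Reₙ where each eᵢ is an idempotent and each corner ring eᵢReᵢ is local. -/
set_option maxHeartbeats 1000000


open TwoSidedIdeal

/-- The Jacobson radical of a ring `R`, as a two-sided ideal. -/
noncomputable def jacobsonRadical (R : Type*) [Ring R] : TwoSidedIdeal R :=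
  (⊥ : TwoSidedIdeal R).jacobson

/-- The quotient ring `R / rad R`. -/
abbrev radQuot (R : Type*) [Ring R] := (jacobsonRadical R).ringCon.Quotient

/-- `R` is semiperfect if `R/rad(R)` is semisimple and idempotents lift along
`R → R/rad(R)`. -/
def IsSemiperfectRing (R : Type*) [Ring R] : Prop :=
  IsSemisimpleRing (radQuot R) ∧
    ∀ y : radQuot R, y * y = y →
      ∃ e : R, e * e = e ∧ (jacobsonRadical R).ringCon.mk' e = y

/-- An element `x` of the corner ring `eRe` is a unit of `eRe` (whose unit is `e`). -/
def IsCornerUnit {R : Type*} [Ring R] (e x : R) : Prop :=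
  ∃ y : R, e * y * e = y ∧ x * y = e ∧ y * x = e

/-- The corner ring `eRe` is a local ring: it is nontrivial and for every element `x`
of it, either `x` or `e - x` is a unit of `eRe`. -/
def CornerIsLocal {R : Type*} [Ring R] (e : R) : Prop :=
  e ≠ 0 ∧ ∀ x : R, e * x * e = x → IsCornerUnit e x ∨ IsCornerUnit e (e - x)

section Basic
variable {R : Type*} [Ring R]

lemma rad_mk_eq_zero_iff (x : R) :
    (jacobsonRadical R).ringCon.mk' x = 0 ↔ x ∈ jacobsonRadical R := by
  have h0 : ((jacobsonRadical R).ringCon.mk' x = (jacobsonRadical R).ringCon.mk' 0) ↔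
      (jacobsonRadical R).ringCon x 0 := RingCon.eq _
  rw [map_zero] at h0
  rw [h0, TwoSidedIdeal.rel_iff, sub_zero]

lemma rad_mk_surjective :
    Function.Surjective ⇑(jacobsonRadical R).ringCon.mk' :=
  Quotient.mk''_surjective

lemma isUnit_one_sub_of_mem_rad {z : R} (hz : z ∈ jacobsonRadical R) : IsUnit (1 - z) := by
  have key : ∀ w ∈ jacobsonRadical R, ∃ t : R, t * (1 - w) = 1 := by
    intro w hw
    obtain ⟨t, ht⟩ := TwoSidedIdeal.mem_jacobson_iff.mp hw (-1)
    rw [TwoSidedIdeal.mem_bot] at ht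
    rw [mul_neg_one, neg_mul, neg_add_eq_sub] at ht
    exact ⟨t, by rw [mul_sub, mul_one, sub_eq_zero.mp ht]⟩
  obtain ⟨t, ht⟩ := key z hz
  have htz : -(t * z) ∈ jacobsonRadical R :=
    neg_mem (TwoSidedIdeal.mul_mem_left _ _ _ hz)
  have ht2 : t = 1 - -(t * z) := by
    rw [sub_neg_eq_add]
    rw [mul_sub, mul_one] at ht
    exact sub_eq_iff_eq_add.mp ht
  obtain ⟨w, hw⟩ := key _ htz
  rw [← ht2] at hw
  have hwt : w = 1 - z := by
    calc w = w * (t * (1 - z)) := by rw [ht, mul_one]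
    _ = (w * t) * (1 - z) := by rw [mul_assoc]
    _ = 1 - z := by rw [hw, one_mul]
  exact ⟨⟨1 - z, t, by rw [← hwt]; exact hw, ht⟩, rfl⟩

lemma eq_zero_of_idem_mem_rad {z : R} (hz : z ∈ jacobsonRadical R) (h : z * z = z) :
    z = 0 := by
  obtain ⟨u, hu⟩ := isUnit_one_sub_of_mem_rad hz
  have h1 : z * ↑u = 0 := by rw [hu, mul_sub, mul_one, h, sub_self]
  calc z = z * (↑u * ↑u⁻¹) := by rw [u.mul_inv, mul_one]
  _ = z * ↑u * ↑u⁻¹ := by rw [mul_assoc]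
  _ = 0 := by rw [h1, zero_mul]

end Basic

section Basic2
variable {R : Type*} [Ring R]

lemma corner_absorb {e x : R} (he : e * e = e) (hx : e * x * e = x) :
    e * x = x ∧ x * e = x := by
  constructor
  · calc e * x = e * (e * x * e) := by rw [hx]
    _ = (e * e) * x * e := by rw [mul_assoc, mul_assoc, mul_assoc]
    _ = x := by rw [he, hx]
  · calc x * e = (e * x * e) * e := by rw [hx]
    _ = e * x * (e * e) := by rw [mul_assoc]
    _ = x := by rw [he, hx]

lemma cornerUnit_sub {e z : R} (he : e * e = e) (hz : z ∈ jacobsonRadical R)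
    (hez : e * z * e = z) : IsCornerUnit e (e - z) := by
  obtain ⟨hez1, hez2⟩ := corner_absorb he hez
  obtain ⟨u, hu⟩ := isUnit_one_sub_of_mem_rad hz
  refine ⟨e * ↑u⁻¹ * e, ?_, ?_, ?_⟩
  · calc e * (e * ↑u⁻¹ * e) * e = (e * e) * ↑u⁻¹ * (e * e) := by simp only [mul_assoc]
    _ = e * ↑u⁻¹ * e := by rw [he]
  · have h1 : (e - z) * e = e - z := by rw [sub_mul, he, hez2]
    have h2 : e - z = e * (1 - z) := by rw [mul_sub, mul_one, hez1]
    calc (e - z) * (e * ↑u⁻¹ * e) = ((e - z) * e) * ↑u⁻¹ * e := by simp only [mul_assoc]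
    _ = (e * (1 - z)) * ↑u⁻¹ * e := by rw [h1, ← h2]
    _ = e * ((1 - z) * ↑u⁻¹) * e := by simp only [mul_assoc]
    _ = e * e := by rw [← hu, u.mul_inv, mul_one]
    _ = e := he
  · have h1 : e * (e - z) = e - z := by rw [mul_sub, he, hez1]
    have h2 : e - z = (1 - z) * e := by rw [sub_mul, one_mul, hez2]
    calc (e * ↑u⁻¹ * e) * (e - z) = e * ↑u⁻¹ * (e * (e - z)) := by simp only [mul_assoc]
    _ = e * ↑u⁻¹ * ((1 - z) * e) := by rw [h1, h2]
    _ = e * (↑u⁻¹ * (1 - z)) * e := by simp only [mul_assoc]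
    _ = e * e := by rw [← hu, u.inv_mul, mul_one]
    _ = e := he

lemma ortho_step {s c : R} (hs : s * s = s) (hc : c * c = c)
    (h1 : (jacobsonRadical R).ringCon.mk' (s * c) = 0)
    (h2 : (jacobsonRadical R).ringCon.mk' (c * s) = 0) :
    ∃ h : R, h * h = h ∧ s * h = 0 ∧ h * s = 0 ∧
      (jacobsonRadical R).ringCon.mk' h = (jacobsonRadical R).ringCon.mk' c := by
  set π := (jacobsonRadical R).ringCon.mk' with hπ
  obtain ⟨u, hu⟩ := isUnit_one_sub_of_mem_rad ((rad_mk_eq_zero_iff _).mp h1)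
  obtain ⟨g, hgdef⟩ : ∃ g : R, g = ↑u * c * ↑u⁻¹ := ⟨_, rfl⟩
  have huc : ↑u * c = c - s * c := by
    rw [hu, sub_mul, one_mul, mul_assoc, hc]
  have hgg : g * g = g := by
    rw [hgdef]
    calc ↑u * c * ↑u⁻¹ * (↑u * c * ↑u⁻¹) = ↑u * c * (↑u⁻¹ * (↑u * (c * ↑u⁻¹))) := by simp only [mul_assoc]
    _ = ↑u * c * (c * ↑u⁻¹) := by rw [u.inv_mul_cancel_left]
    _ = ↑u * (c * c) * ↑u⁻¹ := by simp only [mul_assoc]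
    _ = ↑u * c * ↑u⁻¹ := by rw [hc]
  have hsg : s * g = 0 := by
    have h3 : s * (↑u * c) = 0 := by
      rw [huc, mul_sub, ← mul_assoc, hs, sub_self]
    calc s * g = s * (↑u * c) * ↑u⁻¹ := by rw [hgdef]; simp only [mul_assoc]
    _ = 0 := by rw [h3, zero_mul]
  have hπu : π (↑u : R) = 1 := by
    rw [hu, map_sub, map_one, h1, sub_zero]
  have hπuinv : π (↑u⁻¹ : R) = 1 := by
    have h4 := congrArg π u.inv_mul
    rw [map_mul, map_one, hπu, mul_one] at h4
    exact h4
  have hπg : π g = π c := by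
    rw [hgdef, map_mul, map_mul, hπu, hπuinv, one_mul, mul_one]
  have hgsg : g * s * g = 0 := by rw [mul_assoc, hsg, mul_zero]
  refine ⟨g - g * s, ?_, ?_, ?_, ?_⟩
  · have e1 : g * s * (g * s) = 0 := by rw [← mul_assoc, hgsg, zero_mul]
    calc (g - g * s) * (g - g * s) = g * g - g * s * g - (g * g * s - g * s * (g * s)) := by noncomm_ring
    _ = g - g * s := by rw [hgg, hgsg, e1, sub_zero, sub_zero]
  · rw [mul_sub, hsg, ← mul_assoc, hsg, zero_mul, sub_zero]
  · rw [sub_mul, mul_assoc, hs, sub_self]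
  · rw [map_sub, map_mul, hπg, ← map_mul, h2, sub_zero]
end Basic2

section Decomp
variable {A M : Type*} [Ring A] [AddCommGroup M] [Module A M]

lemma indep_comp_zero {n : ℕ} {S : Fin n → Submodule A M} (hS : iSupIndep S)
    {g : Fin n → M} (hg : ∀ i, g i ∈ S i) (h0 : ∑ i, g i = 0) : ∀ i, g i = 0 := by
  intro i
  have hsum : g i + ∑ j ∈ Finset.univ.erase i, g j = 0 := by
    rw [Finset.add_sum_erase _ _ (Finset.mem_univ i)]; exact h0
  have hmem : g i ∈ ⨆ (j) (_ : j ≠ i), S j := by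
    have : g i = -∑ j ∈ Finset.univ.erase i, g j := by
      rw [eq_neg_iff_add_eq_zero]; exact hsum
    rw [this]
    refine neg_mem (Submodule.sum_mem _ fun j hj => ?_)
    exact Submodule.mem_iSup_of_mem j
      (Submodule.mem_iSup_of_mem (Finset.ne_of_mem_erase hj) (hg j))
  exact Submodule.disjoint_def.mp (hS i) _ (hg i) hmem

lemma semisimple_decomp (Q : Type*) [Ring Q] [IsSemisimpleRing Q] :
    ∃ (n : ℕ) (f : Fin n → Q),
      (∀ i, f i * f i = f i) ∧ (∀ i j, i ≠ j → f i * f j = 0) ∧ (∑ i, f i = 1) ∧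
      ∀ i, f i ≠ 0 ∧ ∀ x : Q, f i * x * f i = x → x ≠ 0 →
        ∃ y, f i * y * f i = y ∧ x * y = f i ∧ y * x = f i := by
  obtain ⟨s, hind, hsup, hsimple⟩ :=
    IsSemisimpleModule.exists_sSupIndep_sSup_simples_eq_top Q Q
  have h1 : (1 : Q) ∈ sSup s := by rw [hsup]; trivial
  rw [sSup_eq_iSup'] at h1
  rw [Submodule.mem_iSup_iff_exists_finset] at h1
  obtain ⟨t, ht⟩ := h1
  set n := t.card with hn
  set S : Fin n → Submodule Q Q := fun i => ((t.equivFin.symm i : s) : Submodule Q Q) with hS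
  have hSind : iSupIndep S := by
    have base := (sSupIndep_iff s).mp hind
    exact base.comp (Subtype.val_injective.comp (t.equivFin.symm.injective))
  have hSatom : ∀ i, IsAtom (S i) := fun i =>
    isSimpleModule_iff_isAtom.mp (hsimple _ (t.equivFin.symm i : s).2)
  have h1' : (1 : Q) ∈ ⨆ i, S i := by
    refine (iSup₂_le fun j hj => ?_ : (⨆ j ∈ t, (j : Submodule Q Q)) ≤ ⨆ i, S i) ht
    have : S (t.equivFin ⟨j, hj⟩) = (j : Submodule Q Q) := by
      simp only [hS, Equiv.symm_apply_apply]
    exact this ▸ le_iSup S _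
  rw [Submodule.mem_iSup_iff_exists_finsupp] at h1'
  obtain ⟨F, hF, hFsum⟩ := h1'
  set f : Fin n → Q := fun i => F i with hf
  have hsum : ∑ i, f i = 1 := by
    rw [← hFsum, Finsupp.sum_fintype _ _ (fun i => rfl)]
  have hcomp : ∀ (j : Fin n) (x : Q), x ∈ S j → ∀ i, x * f i = if i = j then x else 0 := by
    intro j x hx i
    have hz := indep_comp_zero hSind
      (g := fun k => x * f k - if k = j then x else 0) (fun k => ?_) ?_ i
    · exact sub_eq_zero.mp hz
    · refine sub_mem ?_ ?_
      · have : x * f k = x • f k := rfl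
        rw [this]; exact Submodule.smul_mem _ _ (hF k)
      · split
        · next h => exact h ▸ hx
        · exact zero_mem _
    · rw [Finset.sum_sub_distrib, ← Finset.mul_sum, hsum, mul_one,
        Finset.sum_ite_eq' Finset.univ j, if_pos (Finset.mem_univ j), sub_self]
  have hfS : ∀ i, f i ∈ S i := hF
  have hidem : ∀ i, f i * f i = f i := by
    intro i
    have := hcomp i (f i) (hfS i) i
    rwa [if_pos rfl] at this
  have hortho : ∀ i j, i ≠ j → f i * f j = 0 := by
    intro i j hij
    have := hcomp i (f i) (hfS i) j
    rwa [if_neg (fun h => hij h.symm)] at this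
  refine ⟨n, f, hidem, hortho, hsum, fun i => ⟨?_, ?_⟩⟩
  · intro hfi
    refine (hSatom i).1 ?_
    rw [Submodule.eq_bot_iff]
    intro x hx
    have := hcomp i x hx i
    rw [if_pos rfl, hfi, mul_zero] at this
    exact this.symm
  · have key : ∀ x : Q, f i * x * f i = x → x ≠ 0 →
        ∃ y, f i * y * f i = y ∧ y * x = f i := by
      intro x hx hx0
      obtain ⟨hfx, hxf⟩ := corner_absorb (hidem i) hx
      have hxS : x ∈ S i := by
        have : (f i * x) • f i ∈ S i := Submodule.smul_mem _ _ (hfS i)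
        rwa [smul_eq_mul, mul_assoc, ← mul_assoc, hx] at this
      have hspan : Submodule.span Q {x} = S i := by
        rcases ((hSatom i).le_iff).mp ((Submodule.span_le).mpr
          (Set.singleton_subset_iff.mpr hxS)) with h | h
        · exact absurd (Submodule.span_singleton_eq_bot.mp h) hx0
        · exact h
      have hfmem : f i ∈ Submodule.span Q {x} := hspan ▸ hfS i
      obtain ⟨b, hb⟩ := Submodule.mem_span_singleton.mp hfmem
      rw [smul_eq_mul] at hb
      refine ⟨f i * b * f i, ?_, ?_⟩
      · calc f i * (f i * b * f i) * f i
            = (f i * f i) * b * (f i * f i) := by simp only [mul_assoc]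
        _ = f i * b * f i := by rw [hidem i]
      · calc (f i * b * f i) * x = f i * b * (f i * x) := by simp only [mul_assoc]
        _ = f i * (b * x) := by rw [hfx, mul_assoc]
        _ = f i := by rw [hb, hidem i]
    intro x hx hx0
    obtain ⟨y, hy, hyx⟩ := key x hx hx0
    have hy0 : y ≠ 0 := by
      intro h
      rw [h, zero_mul] at hyx
      exact ((by
        intro hfi
        refine (hSatom i).1 ?_
        rw [Submodule.eq_bot_iff]
        intro w hw
        have := hcomp i w hw i
        rw [if_pos rfl, hfi, mul_zero] at this
        exact this.symm : f i ≠ 0)) hyx.symm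
    obtain ⟨z, hz, hzy⟩ := key y hy hy0
    obtain ⟨hfx, hxf⟩ := corner_absorb (hidem i) hx
    have hxz : x = z := by
      calc x = f i * x := hfx.symm
      _ = (z * y) * x := by rw [hzy]
      _ = z * (y * x) := by rw [mul_assoc]
      _ = z * f i := by rw [hyx]
      _ = z := (corner_absorb (hidem i) hz).2
    exact ⟨y, hy, by rw [hxz, hzy], hyx⟩
end Decomp

section Lift
variable {R : Type*} [Ring R]

lemma sum_idem_facts {n : ℕ} {e : Fin n → R} (hidem : ∀ i, e i * e i = e i)
    (hortho : ∀ i j, i ≠ j → e i * e j = 0) :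
    (∀ i, e i * (∑ j, e j) = e i) ∧ (∀ i, (∑ j, e j) * e i = e i) ∧
      (∑ j, e j) * (∑ j, e j) = ∑ j, e j := by
  have hrow : ∀ i, e i * (∑ j, e j) = e i := by
    intro i
    rw [Finset.mul_sum]
    rw [Finset.sum_eq_single i (fun j _ hj => hortho i j (Ne.symm hj))
      (fun h => absurd (Finset.mem_univ i) h)]
    exact hidem i
  have hcol : ∀ i, (∑ j, e j) * e i = e i := by
    intro i
    rw [Finset.sum_mul]
    rw [Finset.sum_eq_single i (fun j _ hj => hortho j i hj)
      (fun h => absurd (Finset.mem_univ i) h)]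
    exact hidem i
  refine ⟨hrow, hcol, ?_⟩
  rw [Finset.sum_mul]
  exact Finset.sum_congr rfl fun i _ => hrow i

lemma lift_ortho {n : ℕ} (f : Fin n → radQuot R)
    (hidem : ∀ i, f i * f i = f i) (hortho : ∀ i j, i ≠ j → f i * f j = 0)
    (hlift : ∀ y : radQuot R, y * y = y →
      ∃ e : R, e * e = e ∧ (jacobsonRadical R).ringCon.mk' e = y) :
    ∃ e : Fin n → R, (∀ i, e i * e i = e i) ∧ (∀ i j, i ≠ j → e i * e j = 0) ∧
      ∀ i, (jacobsonRadical R).ringCon.mk' (e i) = f i := by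
  induction n with
  | zero => exact ⟨Fin.elim0, nofun, nofun, nofun⟩
  | succ n IH =>
    obtain ⟨e', he'idem, he'ortho, he'π⟩ := IH (fun i => f i.castSucc)
      (fun i => hidem _)
      (fun i j hij => hortho _ _ (fun h => hij (Fin.castSucc_injective n h)))
    obtain ⟨hrow, hcol, hss⟩ := sum_idem_facts he'idem he'ortho
    obtain ⟨c, hc, hcπ⟩ := hlift (f (Fin.last n)) (hidem _)
    have hπs : (jacobsonRadical R).ringCon.mk' (∑ i, e' i) = ∑ i : Fin n, f (Fin.castSucc i) := by
      rw [map_sum]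
      exact Finset.sum_congr rfl fun i _ => he'π i
    have h1 : (jacobsonRadical R).ringCon.mk' ((∑ i, e' i) * c) = 0 := by
      rw [map_mul, hπs, hcπ, Finset.sum_mul]
      refine Finset.sum_eq_zero fun i _ => hortho _ _ (Fin.castSucc_lt_last i).ne
    have h2 : (jacobsonRadical R).ringCon.mk' (c * (∑ i, e' i)) = 0 := by
      rw [map_mul, hπs, hcπ, Finset.mul_sum]
      refine Finset.sum_eq_zero fun i _ => hortho _ _ (Fin.castSucc_lt_last i).ne'
    obtain ⟨h, hhh, hsh, hhs, hhπ⟩ := ortho_step hss hc h1 h2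
    have he'h : ∀ i, e' i * h = 0 := fun i => by
      rw [← hrow i, mul_assoc, hsh, mul_zero]
    have hhe' : ∀ i, h * e' i = 0 := fun i => by
      rw [← hcol i, ← mul_assoc, hhs, zero_mul]
    refine ⟨Fin.snoc e' h, ?_, ?_, ?_⟩
    · intro i
      rcases Fin.eq_castSucc_or_eq_last i with ⟨i', rfl⟩ | rfl
      · simpa only [Fin.snoc_castSucc] using he'idem i'
      · simpa only [Fin.snoc_last] using hhh
    · intro i j hij
      rcases Fin.eq_castSucc_or_eq_last i with ⟨i', rfl⟩ | rfl <;>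
        rcases Fin.eq_castSucc_or_eq_last j with ⟨j', rfl⟩ | rfl
      · simpa only [Fin.snoc_castSucc] using
          he'ortho i' j' (fun hh => hij (congrArg Fin.castSucc hh))
      · simpa only [Fin.snoc_castSucc, Fin.snoc_last] using he'h i'
      · simpa only [Fin.snoc_castSucc, Fin.snoc_last] using hhe' j'
      · exact absurd rfl hij
    · intro i
      rcases Fin.eq_castSucc_or_eq_last i with ⟨i', rfl⟩ | rfl
      · simpa only [Fin.snoc_castSucc] using he'π i'
      · simpa only [Fin.snoc_last] using hhπ ▸ hcπ
end Lift

/-- A semiperfect ring has semisimple quotient by the Jacobson radical and idempotents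
lift modulo the radical; conversely, a ring with these two properties decomposes, as a
left module over itself, as a finite direct sum `R = Re₁ ⊕ ⋯ ⊕ Reₙ` where each `eᵢ` is
an idempotent whose corner ring `eᵢReᵢ` is local. -/
theorem stmt_5 (R : Type*) [Ring R] :
    (IsSemiperfectRing R →
      (IsSemisimpleRing (radQuot R) ∧
        ∀ y : radQuot R, y * y = y →
          ∃ e : R, e * e = e ∧ (jacobsonRadical R).ringCon.mk' e = y)) ∧
    (IsSemiperfectRing R →
      ∃ (n : ℕ) (e : Fin n → R),
        (∀ i, IsIdempotentElem (e i)) ∧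
        DirectSum.IsInternal (fun i : Fin n => (Submodule.span R {e i} : Submodule R R)) ∧
        ∀ i, CornerIsLocal (e i)) := by
  refine ⟨fun h => h, ?_⟩
  rintro ⟨hss, hlift⟩
  haveI : IsSemisimpleRing (radQuot R) := hss
  obtain ⟨n, f, hfidem, hfortho, hfsum, hfprop⟩ := semisimple_decomp (radQuot R)
  obtain ⟨e, heidem, heortho, heπ⟩ := lift_ortho f hfidem hfortho hlift
  obtain ⟨hrow, hcol, hss'⟩ := sum_idem_facts heidem heortho
  have hesum : ∑ i, e i = 1 := by
    have hidm : ((1 : R) - ∑ i, e i) * ((1 : R) - ∑ i, e i) = (1 : R) - ∑ i, e i := by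
      have expand : ((1 : R) - ∑ i, e i) * ((1 : R) - ∑ i, e i)
          = 1 - (∑ i, e i) - (∑ i, e i) + (∑ i, e i) * (∑ i, e i) := by noncomm_ring
      rw [expand, hss']
      abel
    have hrad : (1 : R) - ∑ i, e i ∈ jacobsonRadical R := by
      rw [← rad_mk_eq_zero_iff, map_sub, map_one, map_sum,
        Finset.sum_congr rfl (fun i _ => heπ i), hfsum, sub_self]
    have := eq_zero_of_idem_mem_rad hrad hidm
    have h2 := sub_eq_zero.mp this
    exact h2.symm
  refine ⟨n, e, fun i => heidem i, ?_, ?_⟩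
  · rw [DirectSum.isInternal_submodule_iff_iSupIndep_and_iSup_eq_top]
    constructor
    · intro i
      rw [Submodule.disjoint_def]
      intro x hx hx'
      obtain ⟨r, hr⟩ := Submodule.mem_span_singleton.mp hx
      have hK : (⨆ (j) (_ : j ≠ i), Submodule.span R {e j}) ≤
          LinearMap.ker (LinearMap.toSpanSingleton R R (e i)) := by
        refine iSup₂_le fun j hj => ?_
        rw [Submodule.span_le, Set.singleton_subset_iff]
        simp only [SetLike.mem_coe, LinearMap.mem_ker, LinearMap.toSpanSingleton_apply]
        rw [smul_eq_mul]
        exact heortho j i hj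
      have hxK : x * e i = 0 := by
        have h3 := hK hx'
        rw [LinearMap.mem_ker, LinearMap.toSpanSingleton_apply, smul_eq_mul] at h3
        exact h3
      have h4 : x = x * e i := by rw [← hr, smul_eq_mul, mul_assoc, heidem i]
      exact h4.trans hxK
    · rw [eq_top_iff]
      intro x _
      have h1 : (1 : R) ∈ ⨆ i, Submodule.span R {e i} := by
        rw [← hesum]
        exact Submodule.sum_mem _ fun i _ =>
          Submodule.mem_iSup_of_mem i (Submodule.mem_span_singleton_self _)
      have h2 := (⨆ i, Submodule.span R {e i}).smul_mem x h1
      rwa [smul_eq_mul, mul_one] at h2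
  · intro i
    set π := (jacobsonRadical R).ringCon.mk' with hπdef
    constructor
    · intro h0
      exact (hfprop i).1 (by rw [← heπ i, h0, map_zero])
    · intro x hx
      by_cases hxr : π x = 0
      · right
        exact cornerUnit_sub (heidem i) ((rad_mk_eq_zero_iff x).mp hxr) hx
      · left
        obtain ⟨hex, hxe⟩ := corner_absorb (heidem i) hx
        have hπx : f i * π x * f i = π x := by
          rw [← heπ i, ← map_mul, ← map_mul, hx]
        obtain ⟨yb, hyb, hxyb, hybx⟩ := (hfprop i).2 (π x) hπx hxr
        obtain ⟨y', hy'⟩ := rad_mk_surjective yb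
        obtain ⟨y, hydef⟩ : ∃ y : R, y = e i * y' * e i := ⟨_, rfl⟩
        have heye : e i * y * e i = y := by
          rw [hydef]
          calc e i * (e i * y' * e i) * e i
              = (e i * e i) * y' * (e i * e i) := by simp only [mul_assoc]
          _ = e i * y' * e i := by rw [heidem i]
        obtain ⟨hey, hye⟩ := corner_absorb (heidem i) heye
        have hπy : π y = yb := by
          rw [hydef, map_mul, map_mul, heπ i, hy']
          exact hyb
        have hz1 : e i - x * y ∈ jacobsonRadical R := by
          rw [← rad_mk_eq_zero_iff, map_sub, map_mul, heπ i, hπy, hxyb, sub_self]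
        have hexy : e i * (x * y) = x * y := by rw [← mul_assoc, hex]
        have hxye : (x * y) * e i = x * y := by rw [mul_assoc, hye]
        have hz1e : e i * (e i - x * y) * e i = e i - x * y := by
          rw [mul_sub, heidem i, hexy, sub_mul, heidem i, hxye]
        have hcu1 : IsCornerUnit (e i) (x * y) := by
          have h5 := cornerUnit_sub (heidem i) hz1 hz1e
          rwa [sub_sub_cancel] at h5
        have hz2 : e i - y * x ∈ jacobsonRadical R := by
          rw [← rad_mk_eq_zero_iff, map_sub, map_mul, heπ i, hπy, hybx, sub_self]
        have heyx : e i * (y * x) = y * x := by rw [← mul_assoc, hey]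
        have hyxe : (y * x) * e i = y * x := by rw [mul_assoc, hxe]
        have hz2e : e i * (e i - y * x) * e i = e i - y * x := by
          rw [mul_sub, heidem i, heyx, sub_mul, heidem i, hyxe]
        have hcu2 : IsCornerUnit (e i) (y * x) := by
          have h5 := cornerUnit_sub (heidem i) hz2 hz2e
          rwa [sub_sub_cancel] at h5
        obtain ⟨w, hw, hxyw, hwxy⟩ := hcu1
        obtain ⟨v, hv, hyxv, hvyx⟩ := hcu2
        obtain ⟨hwe', hwe⟩ := corner_absorb (heidem i) hw
        have hxyw' : x * (y * w) = e i := by rw [← mul_assoc]; exact hxyw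
        have hvy : v * y = y * w := by
          calc v * y = (v * y) * e i := by rw [mul_assoc, hye]
          _ = (v * y) * (x * (y * w)) := by rw [hxyw']
          _ = (v * (y * x)) * (y * w) := by simp only [mul_assoc]
          _ = e i * (y * w) := by rw [hvyx]
          _ = y * w := by rw [← mul_assoc, hey]
        refine ⟨y * w, ?_, hxyw', ?_⟩
        · calc e i * (y * w) * e i = (e i * y) * (w * e i) := by simp only [mul_assoc]
          _ = y * w := by rw [hey, hwe]
        · rw [← hvy, mul_assoc]
          exact hvyx
end

section
/- A Hom-finite k-linear additive category C is Krull–Schmidt if and only if every idempotent in C splits, if and only if for every indecomposable object X the endomorphism ring End_C(X) has no non-trivial idempotents. -/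
open CategoryTheory CategoryTheory.Limits

/-- An object `X` of an additive category is indecomposable if it is nonzero and in any
decomposition `X ≅ Y ⊞ Z` one of the summands is zero. -/
def IsIndecomposableObj {C : Type*} [Category C] [Preadditive C] [HasFiniteBiproducts C]
    [HasBinaryBiproducts C] (X : C) : Prop :=
  ¬ IsZero X ∧ ∀ Y Z : C, Nonempty (X ≅ Y ⊞ Z) → IsZero Y ∨ IsZero Z

/-- An additive category is Krull–Schmidt if every object is a finite direct sum of
objects with local endomorphism rings. -/
def IsKrullSchmidt (C : Type*) [Category C] [Preadditive C] [HasFiniteBiproducts C] : Prop :=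
  ∀ X : C, ∃ (n : ℕ) (Y : Fin n → C),
    Nonempty (X ≅ ⨁ Y) ∧ ∀ i, IsLocalRing (CategoryTheory.End (Y i))

/-!
Hom-finiteness makes every object a finite biproduct of indecomposables (induct on the dimension
of `End X`), and a finite-dimensional algebra whose only idempotents are `0` and `1` is local: for
an element `a` that is neither nilpotent nor a unit, the coprime factors `X ^ n` and `q` of an
annihilating polynomial `X ^ n * q` of `a` would produce a nontrivial idempotent in `k[a]`.

In an idempotent complete category an idempotent `e` of an indecomposable object is trivial,
since splitting `e` and `𝟙 - e` decomposes the object as a biproduct.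

Conversely, if `End A` is local and all idempotents of `B` split, then so do those of `A ⊞ B`:
either `inl ≫ e ≫ fst` or `inl ≫ (𝟙 - e) ≫ fst` is invertible, so a copy of `A` splits off `e`
or `𝟙 - e`, and what remains of `e` lives on a complement that is again a copy of `B`.
Induction over the summands shows that Krull–Schmidt categories are idempotent complete.
-/

section Biproducts

variable {C : Type*} [Category C] [Preadditive C]

theorem biprod.desc_comp_lift_eq_id [HasBinaryBiproducts C] {X Y Z : C} {i₁ : Y ⟶ X}
    {r₁ : X ⟶ Y} {i₂ : Z ⟶ X} {r₂ : X ⟶ Z} (h₁ : i₁ ≫ r₁ = 𝟙 Y) (h₂ : i₂ ≫ r₂ = 𝟙 Z)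
    (h₁₂ : i₁ ≫ r₂ = 0) (h₂₁ : i₂ ≫ r₁ = 0) :
    biprod.desc i₁ i₂ ≫ biprod.lift r₁ r₂ = 𝟙 (Y ⊞ Z) := by
  ext <;> simp [h₁, h₂, h₁₂, h₂₁]

variable [HasFiniteBiproducts C]

theorem isZero_biproduct_of_isEmpty {J : Type} [Finite J] [IsEmpty J] (Y : J → C) :
    IsZero (⨁ Y) :=
  (IsZero.iff_id_eq_zero _).2 (biproduct.hom_ext _ _ isEmptyElim)

variable [HasBinaryBiproducts C]

noncomputable def biproductFinSuccIso {n : ℕ} (Y : Fin (n + 1) → C) :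
    ⨁ Y ≅ Y 0 ⊞ ⨁ (fun i : Fin n => Y i.succ) :=
  (biproduct.isLimit Y).conePointUniqueUpToIso
    (extendFanIsLimit Y (biproduct.isLimit _) (BinaryBiproduct.isLimit _ _))

noncomputable def biproductSumIso {J K : Type} [Finite J] [Finite K] (Y : J → C) (Z : K → C) :
    ⨁ (Sum.elim Y Z) ≅ (⨁ Y) ⊞ (⨁ Z) :=
  (biproduct.isLimit _).conePointUniqueUpToIso
    (Fan.combPairIsLimit (biproduct.isLimit Y) (biproduct.isLimit Z) (BinaryBiproduct.isLimit _ _))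

noncomputable def biproductFinAppendIso {p q : ℕ} (Y : Fin p → C) (Z : Fin q → C) :
    ⨁ (Fin.append Y Z) ≅ (⨁ Y) ⊞ (⨁ Z) :=
  (biproduct.whiskerEquiv finSumFinEquiv (fun j => eqToIso (by cases j <;> simp))).symm ≪≫
    biproductSumIso Y Z

end Biproducts

namespace CategoryTheory.Idempotents

variable {C : Type*} [Category C]

def Splits {X : C} (p : X ⟶ X) : Prop :=
  ∃ (Y : C) (i : Y ⟶ X) (r : X ⟶ Y), i ≫ r = 𝟙 Y ∧ r ≫ i = p

def IdempotentsSplit (X : C) : Prop :=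
  ∀ p : X ⟶ X, p ≫ p = p → Splits p

theorem isIdempotentComplete_iff_forall_idempotentsSplit :
    IsIdempotentComplete C ↔ ∀ X : C, IdempotentsSplit X :=
  ⟨fun h X => h.idempotents_split X, fun h => ⟨h⟩⟩

theorem IdempotentsSplit.of_iso {X X' : C} (φ : X ≅ X') (h : IdempotentsSplit X) :
    IdempotentsSplit X' := fun p hp =>
  split_imp_of_iso φ (φ.hom ≫ p ≫ φ.inv) p (by simp) (h _ (by simp [reassoc_of% hp]))

theorem IdempotentsSplit.of_isZero {X : C} (hX : IsZero X) : IdempotentsSplit X := fun p _ =>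
  ⟨X, 𝟙 X, 𝟙 X, by simp, hX.eq_of_src _ _⟩

theorem Splits.of_retract {X W : C} {s : W ⟶ X} {t : X ⟶ W} (hst : s ≫ t = 𝟙 W)
    (hW : IdempotentsSplit W) {q : X ⟶ X} (hq : q ≫ q = q) (hqr : q ≫ t ≫ s = q)
    (hrq : t ≫ s ≫ q = q) : Splits q := by
  obtain ⟨Y, i, r, hir, hri⟩ := hW (s ≫ q ≫ t) (by
    simp only [Category.assoc, reassoc_of% hrq, reassoc_of% hq])
  refine ⟨Y, i ≫ s, t ≫ r, by simp [reassoc_of% hst, hir], ?_⟩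
  simp [reassoc_of% hri, hrq, hqr]

section Biprod

variable [Preadditive C] [HasBinaryBiproducts C]

theorem Splits.add {X : C} {p q : X ⟶ X} (hp : Splits p) (hq : Splits q) (hpq : p ≫ q = 0)
    (hqp : q ≫ p = 0) : Splits (p + q) := by
  obtain ⟨Y, i₁, r₁, h₁, rfl⟩ := hp
  obtain ⟨Z, i₂, r₂, h₂, rfl⟩ := hq
  have h₁₂ : i₁ ≫ r₂ = 0 := by
    simpa [reassoc_of% h₁, h₂] using i₁ ≫= hpq =≫ r₂
  have h₂₁ : i₂ ≫ r₁ = 0 := by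
    simpa [reassoc_of% h₂, h₁] using i₂ ≫= hqp =≫ r₁
  exact ⟨Y ⊞ Z, biprod.desc i₁ i₂, biprod.lift r₁ r₂, biprod.desc_comp_lift_eq_id h₁ h₂ h₁₂ h₂₁,
    biprod.lift_desc ..⟩

noncomputable def isoBiprodOfSplittings {X Y Z : C} {i₁ : Y ⟶ X} {r₁ : X ⟶ Y} {i₂ : Z ⟶ X}
    {r₂ : X ⟶ Z} (h₁ : i₁ ≫ r₁ = 𝟙 Y) (h₂ : i₂ ≫ r₂ = 𝟙 Z) (h : r₁ ≫ i₁ + r₂ ≫ i₂ = 𝟙 X) :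
    X ≅ Y ⊞ Z where
  hom := biprod.lift r₁ r₂
  inv := biprod.desc i₁ i₂
  hom_inv_id := by rw [biprod.lift_desc, h]
  inv_hom_id := by
    -- each cross term `x` satisfies `x = x + x`, by inserting `h` in the middle
    refine biprod.desc_comp_lift_eq_id h₁ h₂ ?_ ?_
    · simpa [reassoc_of% h₁, h₂] using i₁ ≫= h =≫ r₂
    · simpa [reassoc_of% h₂, h₁] using i₂ ≫= h =≫ r₁

variable {A B : C}

theorem exists_retract_one_sub {u : A ⟶ A ⊞ B} {v : A ⊞ B ⟶ A}
    (hv : biprod.inl ≫ v = 𝟙 A) (huv : u ≫ v = 𝟙 A) :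
    ∃ (s : B ⟶ A ⊞ B) (t : A ⊞ B ⟶ B), s ≫ t = 𝟙 B ∧ t ≫ s = 𝟙 _ - v ≫ u := by
  refine ⟨biprod.inr ≫ (𝟙 _ - v ≫ biprod.inl), (𝟙 _ - v ≫ u) ≫ biprod.snd, ?_, ?_⟩
  · simp [reassoc_of% hv]
  · have hsnd : biprod.snd ≫ biprod.inr = 𝟙 (A ⊞ B) - biprod.fst ≫ biprod.inl := by
      rw [← biprod.total]; abel
    calc ((𝟙 _ - v ≫ u) ≫ biprod.snd) ≫ biprod.inr ≫ (𝟙 _ - v ≫ biprod.inl)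
        = (𝟙 _ - v ≫ u) ≫ (𝟙 _ - biprod.fst ≫ biprod.inl) ≫ (𝟙 _ - v ≫ biprod.inl) := by
          rw [← hsnd]; simp only [Category.assoc]
      _ = (𝟙 _ - v ≫ u) ≫ (𝟙 _ - v ≫ biprod.inl) := by
          simp [Preadditive.sub_comp, reassoc_of% hv]
      _ = 𝟙 _ - v ≫ u := by
          simp [Preadditive.comp_sub, Preadditive.sub_comp, reassoc_of% huv]

theorem exists_splits_le_of_isIso {e : A ⊞ B ⟶ A ⊞ B} (he : e ≫ e = e)
    [IsIso (biprod.inl ≫ e ≫ biprod.fst)] (hB : IdempotentsSplit B) :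
    ∃ g : A ⊞ B ⟶ A ⊞ B, Splits g ∧ g ≫ g = g ∧ g ≫ e = g ∧ e ≫ g = g ∧
      ∀ q : A ⊞ B ⟶ A ⊞ B, q ≫ q = q → q ≫ (𝟙 _ - g) = q → (𝟙 _ - g) ≫ q = q → Splits q := by
  set v := e ≫ biprod.fst ≫ inv (biprod.inl ≫ e ≫ biprod.fst)
  have hv : biprod.inl ≫ v = 𝟙 A := by
    simpa only [v, Category.assoc] using IsIso.hom_inv_id (biprod.inl ≫ e ≫ biprod.fst)
  have huv : (biprod.inl ≫ e) ≫ v = 𝟙 A := by rw [Category.assoc, reassoc_of% he, hv]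
  obtain ⟨s, t, hst, hts⟩ := exists_retract_one_sub hv huv
  -- `g` projects onto the copy `inl ≫ e` of `A` inside the image of `e`
  refine ⟨v ≫ biprod.inl ≫ e, ⟨A, _, v, huv, rfl⟩, by simp [reassoc_of% huv], by simp [he],
    by simp [v, reassoc_of% he], fun q hq h₁ h₂ => ?_⟩
  exact Splits.of_retract hst hB hq (by rw [hts, h₁]) (by rw [reassoc_of% hts, h₂])

theorem idempotentsSplit_biprod [IsLocalRing (End A)] (hB : IdempotentsSplit B) :
    IdempotentsSplit (A ⊞ B) := by
  intro e he
  have hsum : (biprod.inl ≫ e ≫ biprod.fst : End A) +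
      (biprod.inl ≫ (𝟙 _ - e) ≫ biprod.fst : End A) = (1 : End A) := by
    simp [Preadditive.sub_comp, Preadditive.comp_sub, End.one_def]
  rcases IsLocalRing.isUnit_or_isUnit_of_add_one (R := End A) hsum with ha | ha
  · have := (isUnit_iff_isIso _).1 ha
    obtain ⟨g, hg, hgg, hge, heg, hcompl⟩ := exists_splits_le_of_isIso he hB
    rw [← add_sub_cancel g e]
    refine hg.add (hcompl _ ?_ ?_ ?_) ?_ ?_ <;>
      simp [Preadditive.sub_comp, Preadditive.comp_sub, he, hgg, hge, heg]
  · have := (isUnit_iff_isIso _).1 ha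
    obtain ⟨g, -, -, hge, heg, hcompl⟩ := exists_splits_le_of_isIso (idem_of_id_sub_idem e he) hB
    simp only [Preadditive.comp_sub, Preadditive.sub_comp, Category.comp_id, Category.id_comp,
      sub_eq_self] at hge heg
    refine hcompl e he ?_ ?_ <;> simp [Preadditive.comp_sub, Preadditive.sub_comp, hge, heg]

end Biprod

end CategoryTheory.Idempotents

open CategoryTheory.Idempotents

section KrullSchmidt

variable {C : Type*} [Category C] [Preadditive C] [HasFiniteBiproducts C] [HasBinaryBiproducts C]

theorem idempotentsSplit_biproduct_of_isLocalRing :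
    ∀ {n : ℕ} (Y : Fin n → C), (∀ i, IsLocalRing (End (Y i))) → IdempotentsSplit (⨁ Y)
  | 0, Y, _ => .of_isZero (isZero_biproduct_of_isEmpty Y)
  | _ + 1, Y, hY =>
    have := hY 0
    have hrest := idempotentsSplit_biproduct_of_isLocalRing _ fun i => hY i.succ
    (idempotentsSplit_biprod hrest).of_iso (biproductFinSuccIso Y).symm

theorem IsKrullSchmidt.isIdempotentComplete (h : IsKrullSchmidt C) : IsIdempotentComplete C :=
  isIdempotentComplete_iff_forall_idempotentsSplit.2 fun X =>
    let ⟨_, Y, ⟨φ⟩, hY⟩ := h X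
    (idempotentsSplit_biproduct_of_isLocalRing Y hY).of_iso φ.symm

theorem IsIndecomposableObj.eq_zero_or_eq_id [IsIdempotentComplete C] {X : C}
    (hX : IsIndecomposableObj X) (e : X ⟶ X) (he : e ≫ e = e) : e = 0 ∨ e = 𝟙 X := by
  obtain ⟨Y, i₁, r₁, h₁, hp₁⟩ := IsIdempotentComplete.idempotents_split X e he
  obtain ⟨Z, i₂, r₂, h₂, hp₂⟩ :=
    IsIdempotentComplete.idempotents_split X (𝟙 X - e) (idem_of_id_sub_idem e he)
  refine (hX.2 Y Z ⟨isoBiprodOfSplittings h₁ h₂ (by rw [hp₁, hp₂, add_sub_cancel])⟩).imp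
    (fun hY => ?_) (fun hZ => ?_)
  · rw [← hp₁, hY.eq_of_src i₁ 0, comp_zero]
  · rw [eq_comm, ← sub_eq_zero, ← hp₂, hZ.eq_of_src i₂ 0, comp_zero]

end KrullSchmidt

section FiniteDimensionalAlgebra

open Polynomial

variable {A : Type*} [Ring A]

theorem isNilpotent_or_isUnit_of_forall_isIdempotentElem (k : Type*) [Field k] [Algebra k A]
    [FiniteDimensional k A] (h : ∀ e : A, IsIdempotentElem e → e = 0 ∨ e = 1) (a : A) :
    IsNilpotent a ∨ IsUnit a := by
  obtain ⟨q, hpq, hq⟩ := (minpoly k a).exists_eq_pow_rootMultiplicity_mul_and_not_dvd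
    (minpoly.ne_zero (IsIntegral.of_finite k a)) 0
  rw [map_zero, sub_zero] at hpq hq
  set n := (minpoly k a).rootMultiplicity 0 + 1
  have hann : aeval a (X ^ n * q) = 0 := by
    rw [pow_succ', mul_assoc, ← hpq, map_mul, minpoly.aeval, mul_zero]
  obtain ⟨u, v, huv⟩ : IsCoprime (X ^ n) q := ((prime_X.coprime_iff_not_dvd).2 hq).pow_left
  have hE : IsIdempotentElem (aeval a (v * q)) := by
    have : (v * q) * (v * q) = v * q - u * v * (X ^ n * q) := by linear_combination (v * q) * huv
    rw [IsIdempotentElem, ← map_mul, this, map_sub, map_mul _ (u * v), hann, mul_zero, sub_zero]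
  rcases h _ hE with h0 | h1
  · right
    have hu : aeval a u * a ^ n = 1 := by
      simpa [h0] using congrArg (aeval a) huv
    have hc : Commute (aeval a u) (a ^ n) := by
      simpa using (Commute.all u (X ^ n)).map (aeval a)
    exact (isUnit_pow_iff (Nat.succ_ne_zero _ : n ≠ 0)).1 (isUnit_iff_exists.2 ⟨_, hc.eq ▸ hu, hu⟩)
  · left
    refine ⟨n, ?_⟩
    calc a ^ n = aeval a (X ^ n * (v * q)) := by simp [h1]
      _ = 0 := by rw [mul_left_comm, map_mul, hann, mul_zero]

theorem IsLocalRing.of_forall_isIdempotentElem (k : Type*) [Field k] [Algebra k A]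
    [FiniteDimensional k A] [Nontrivial A] (h : ∀ e : A, IsIdempotentElem e → e = 0 ∨ e = 1) :
    IsLocalRing A :=
  .of_isUnit_or_isUnit_one_sub_self fun a =>
    (isNilpotent_or_isUnit_of_forall_isIdempotentElem k h a).symm.imp_right
      IsNilpotent.isUnit_one_sub

end FiniteDimensionalAlgebra

section Decomposition

open Module

variable {C : Type*} [Category C] [Preadditive C]

theorem nontrivial_hom_self_of_not_isZero {X : C} (hX : ¬IsZero X) : Nontrivial (X ⟶ X) :=
  ⟨𝟙 X, 0, mt (IsZero.iff_id_eq_zero X).2 hX⟩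

variable (k : Type*) [Field k] [Linear k C]

theorem finrank_hom_self_pos {X : C} [FiniteDimensional k (X ⟶ X)] (hX : ¬IsZero X) :
    0 < finrank k (X ⟶ X) :=
  have := nontrivial_hom_self_of_not_isZero hX
  finrank_pos

theorem finrank_hom_self_add_finrank_hom_self_le [HasBinaryBiproducts C] {X Y Z : C}
    (φ : X ≅ Y ⊞ Z) [FiniteDimensional k (X ⟶ X)] :
    finrank k (Y ⟶ Y) + finrank k (Z ⟶ Z) ≤ finrank k (X ⟶ X) := by
  let π : (X ⟶ X) →ₗ[k] (Y ⟶ Y) × (Z ⟶ Z) :=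
    ((Linear.leftComp k Y (biprod.inl ≫ φ.inv)).comp
      (Linear.rightComp k X (φ.hom ≫ biprod.fst))).prod
    ((Linear.leftComp k Z (biprod.inr ≫ φ.inv)).comp
      (Linear.rightComp k X (φ.hom ≫ biprod.snd)))
  have hπ : Function.Surjective π := fun ⟨f, g⟩ =>
    ⟨φ.hom ≫ biprod.map f g ≫ φ.inv, by simp [π]⟩
  have := Module.Finite.of_surjective π hπ
  have := Module.Finite.of_surjective (LinearMap.fst k (Y ⟶ Y) (Z ⟶ Z)) Prod.fst_surjective
  have := Module.Finite.of_surjective (LinearMap.snd k (Y ⟶ Y) (Z ⟶ Z)) Prod.snd_surjective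
  rw [← finrank_prod]
  exact LinearMap.finrank_le_finrank_of_surjective hπ

variable [HasFiniteBiproducts C] [HasBinaryBiproducts C]

theorem exists_iso_biproduct_isIndecomposableObj (hfin : ∀ X : C, FiniteDimensional k (X ⟶ X))
    (X : C) : ∃ (n : ℕ) (Y : Fin n → C), Nonempty (X ≅ ⨁ Y) ∧ ∀ i, IsIndecomposableObj (Y i) := by
  induction hX : finrank k (X ⟶ X) using Nat.strong_induction_on generalizing X with
  | _ N ih =>
  by_cases hz : IsZero X
  · exact ⟨0, Fin.elim0, ⟨hz.iso (isZero_biproduct_of_isEmpty _)⟩, fun i => i.elim0⟩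
  by_cases hind : IsIndecomposableObj X
  · exact ⟨1, fun _ => X, ⟨(biproductUniqueIso fun _ : Fin 1 => X).symm⟩, fun _ => hind⟩
  simp only [IsIndecomposableObj, hz, not_false_eq_true, true_and, not_forall, not_or] at hind
  obtain ⟨Y, Z, ⟨φ⟩, hY, hZ⟩ := hind
  have hle := finrank_hom_self_add_finrank_hom_self_le k φ
  have hY₀ := finrank_hom_self_pos k hY
  have hZ₀ := finrank_hom_self_pos k hZ
  obtain ⟨p, Y', ⟨ψY⟩, hY'⟩ := ih _ (by omega) Y rfl
  obtain ⟨q, Z', ⟨ψZ⟩, hZ'⟩ := ih _ (by omega) Z rfl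
  refine ⟨p + q, Fin.append Y' Z',
    ⟨φ ≪≫ biprod.mapIso ψY ψZ ≪≫ (biproductFinAppendIso Y' Z').symm⟩, Fin.addCases ?_ ?_⟩ <;>
    simpa

theorem isKrullSchmidt_of_trivial_idempotents (hfin : ∀ X : C, FiniteDimensional k (X ⟶ X))
    (h : ∀ X : C, IsIndecomposableObj X → ∀ e : End X, e * e = e → e = 0 ∨ e = 1) :
    IsKrullSchmidt C := by
  intro X
  obtain ⟨n, Y, hX, hY⟩ := exists_iso_biproduct_isIndecomposableObj k hfin X
  refine ⟨n, Y, hX, fun i => ?_⟩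
  have : FiniteDimensional k (End (Y i)) := hfin (Y i)
  have : Nontrivial (End (Y i)) := nontrivial_hom_self_of_not_isZero (hY i).1
  exact IsLocalRing.of_forall_isIdempotentElem k (h _ (hY i))

end Decomposition

/-- A Hom-finite `k`-linear additive category `C` is Krull–Schmidt iff every idempotent
in `C` splits, iff the endomorphism ring of every indecomposable object has no
non-trivial idempotents. -/
theorem stmt_8 (k : Type*) [Field k] {C : Type*} [Category C] [Preadditive C]
    [HasFiniteBiproducts C] [HasBinaryBiproducts C] [Linear k C]
    (homfin : ∀ X Y : C, FiniteDimensional k (X ⟶ Y)) :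
    (IsKrullSchmidt C ↔ IsIdempotentComplete C) ∧
    (IsKrullSchmidt C ↔
      ∀ X : C, IsIndecomposableObj X →
        ∀ e : CategoryTheory.End X, e * e = e → e = 0 ∨ e = 1) := by
  have hcond : IsIdempotentComplete C → ∀ X : C, IsIndecomposableObj X →
      ∀ e : End X, e * e = e → e = 0 ∨ e = 1 := fun _ _ hX e he => hX.eq_zero_or_eq_id e he
  have hKS := isKrullSchmidt_of_trivial_idempotents k fun X => homfin X X
  exact ⟨⟨IsKrullSchmidt.isIdempotentComplete, fun h => hKS (hcond h)⟩,
    ⟨fun h => hcond h.isIdempotentComplete, hKS⟩⟩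
end

section
/- Let A be a finite-dimensional algebra with rad^l(A) = 0 and let P• be a homotopically minimal complex of finitely generated projective A-modules. Then the ideal Htp(P•) ⊆ End_{C(A-proj)}(P•) of chain endomorphisms homotopic to zero satisfies Htp(P•)^l = 0. -/
/-!
If `h` is a homotopy from `f` to `0`, then `f = h ∘ d + d ∘ h` componentwise. When all
differentials land in `rad(A) • P`, so does `h ∘ d` (as `h` is linear) and trivially `d ∘ h`;
hence every null-homotopic endomorphism maps `P` into `rad(A) • P`, a product of `l` of them
maps `P` into `rad(A)^l • P`, and `rad(A)^l = 0`.
-/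

open CategoryTheory CategoryTheory.Limits

/-- The radical of a module: `rad(A) • M`. -/
def radSubmodule (A : Type) [Ring A] (M : Type) [AddCommGroup M] [Module A M] :
    Submodule A M :=
  ((⊥ : Ideal A).jacobson) • (⊤ : Submodule A M)

namespace Ideal

variable {A : Type*} [Ring A] (I : Ideal A)

theorem pow_eq_bot_of_forall_prod_eq_zero {l : ℕ}
    (h : ∀ a : Fin l → A, (∀ i, a i ∈ I) → (List.ofFn a).prod = 0) : I ^ l = ⊥ := by
  suffices key : ∀ n (L : List A), (∀ a ∈ L, a ∈ I) → L.length + n = l →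
      ∀ x ∈ I ^ n, x * L.prod = 0 by
    rw [eq_bot_iff]
    intro x hx
    simpa using key l [] (by simp) (zero_add l) x hx
  intro n
  induction n with
  | zero =>
    rintro L hL rfl x -
    simpa using congrArg (x * ·) (h L.get fun i => hL _ (List.get_mem _ _))
  | succ n ih =>
    intro L hL hlen x hx
    refine Submodule.smul_induction_on (hx : x ∈ I ^ n • I) (fun r hr s hs => ?_)
      fun y z hy hz => ?_
    · rw [smul_eq_mul, mul_assoc, ← List.prod_cons]
      exact ih (s :: L) (by simpa [hs] using hL) (by simp; omega) r hr
    · rw [add_mul, hy, hz, add_zero]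

end Ideal

namespace Submodule

variable {A M N : Type*} [Ring A] [AddCommGroup M] [Module A M] [AddCommGroup N] [Module A N]
  {I : Ideal A}

theorem map_le_smul_top_of_le {p : Submodule A M} (f : M →ₗ[A] N) (hp : p ≤ I • ⊤) :
    p.map f ≤ I • ⊤ :=
  calc p.map f ≤ (I • ⊤ : Submodule A M).map f := map_mono hp
    _ = I • (⊤ : Submodule A M).map f := map_smul'' ..
    _ ≤ I • ⊤ := smul_mono_right _ le_top

theorem range_list_prod_le_pow_smul_top (L : List (Module.End A M))
    (hL : ∀ f ∈ L, LinearMap.range f ≤ I • ⊤) :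
    LinearMap.range L.prod ≤ I ^ L.length • ⊤ := by
  induction L with
  | nil => simp [Module.End.one_eq_id, Submodule.pow_zero]
  | cons f L ih =>
    rw [List.prod_cons, Module.End.mul_eq_comp, LinearMap.range_comp, List.length_cons,
      Submodule.pow_succ, Submodule.mul_smul]
    calc map f (LinearMap.range L.prod)
        ≤ map f (I ^ L.length • ⊤) :=
          map_mono (ih fun g hg => hL g (List.mem_cons_of_mem f hg))
      _ = I ^ L.length • LinearMap.range f := by rw [map_smul'', LinearMap.range_eq_map]
      _ ≤ I ^ L.length • I • ⊤ := smul_mono_right _ (hL f List.mem_cons_self)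

end Submodule

theorem Module.End.list_prod_eq_zero_of_range_le_smul_top {A M : Type*} [Ring A] [AddCommGroup M]
    [Module A M] {I : Ideal A} (L : List (Module.End A M)) (hI : I ^ L.length = ⊥)
    (hL : ∀ f ∈ L, LinearMap.range f ≤ I • ⊤) : L.prod = 0 := by
  rw [← LinearMap.range_eq_bot, eq_bot_iff]
  simpa [hI] using Submodule.range_list_prod_le_pow_smul_top L hL

theorem Homotopy.range_f_le_smul_top {A : Type*} [Ring A] {I : Ideal A} {ι : Type*}
    {c : ComplexShape ι} {P Q : HomologicalComplex (ModuleCat A) c} {f : P ⟶ Q}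
    (h : Homotopy f 0) (hP : ∀ i j, LinearMap.range (P.d i j).hom ≤ I • ⊤)
    (hQ : ∀ i j, LinearMap.range (Q.d i j).hom ≤ I • ⊤) (n : ι) :
    LinearMap.range (f.f n).hom ≤ I • ⊤ := by
  have hf : (f.f n).hom = (h.hom (c.next n) n).hom ∘ₗ (P.d n (c.next n)).hom +
      (Q.d (c.prev n) n).hom ∘ₗ (h.hom n (c.prev n)).hom := by
    rw [h.comm n]
    simp only [dNext, prevD, AddMonoidHom.mk'_apply, HomologicalComplex.zero_f_apply, add_zero,
      ModuleCat.hom_add, ModuleCat.hom_comp]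
  rw [hf]
  refine (LinearMap.range_add_le _ _).trans (sup_le ?_ ?_)
  · rw [LinearMap.range_comp]
    exact Submodule.map_le_smul_top_of_le _ (hP _ _)
  · exact (LinearMap.range_comp_le_range _ _).trans (hQ _ _)

theorem stmt_16_general (A : Type) [Ring A] (l : ℕ)
    (hl : ∀ a : Fin l → A, (∀ i, a i ∈ (⊥ : Ideal A).jacobson) → (List.ofFn a).prod = 0)
    (P : CochainComplex (ModuleCat.{0} A) ℤ)
    (hmin : ∀ n : ℤ, ∀ x : P.X n, P.d n (n + 1) x ∈ radSubmodule A (P.X (n + 1))) :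
    ∀ φ : Fin l → CategoryTheory.End P,
      (∀ i, Nonempty (Homotopy (φ i : P ⟶ P) 0)) → (List.ofFn φ).prod = 0 := by
  intro φ hφ
  have hd : ∀ i j, LinearMap.range (P.d i j).hom ≤ (⊥ : Ideal A).jacobson • ⊤ := by
    intro i j
    by_cases hij : (ComplexShape.up ℤ).Rel i j
    · obtain rfl : i + 1 = j := hij
      rintro _ ⟨x, rfl⟩
      exact hmin i x
    · simp [P.shape i j hij]
  refine HomologicalComplex.hom_ext _ _ fun n => ModuleCat.hom_ext ?_
  let evalEnd : End P →* Module.End A (P.X n) :=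
    (ModuleCat.endRingEquiv _).toMonoidHom.comp ((HomologicalComplex.eval _ _ n).mapEnd P)
  change evalEnd (List.ofFn φ).prod = 0
  rw [map_list_prod]
  refine Module.End.list_prod_eq_zero_of_range_le_smul_top (I := (⊥ : Ideal A).jacobson) _ ?_ ?_
  · simpa using Ideal.pow_eq_bot_of_forall_prod_eq_zero _ hl
  · simp only [List.mem_map, List.mem_ofFn]
    rintro _ ⟨_, ⟨i, rfl⟩, rfl⟩
    exact (hφ i).some.range_f_le_smul_top hd hd n

/-- Let `A` be a finite-dimensional algebra with `rad(A)^l = 0` (expressed elementwise)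
and let `P•` be a homotopically minimal complex of finitely generated projective
`A`-modules (i.e. all differentials factor through the radicals). Then the ideal
`Htp(P•)` of null-homotopic chain endomorphisms of `P•` satisfies `Htp(P•)^l = 0`:
every product of `l` null-homotopic endomorphisms vanishes. -/
theorem stmt_16 (k : Type) [Field k] (A : Type) [Ring A] [Algebra k A]
    [FiniteDimensional k A] (l : ℕ)
    (hl : ∀ a : Fin l → A, (∀ i, a i ∈ (⊥ : Ideal A).jacobson) → (List.ofFn a).prod = 0)
    (P : CochainComplex (ModuleCat.{0} A) ℤ)
    (hproj : ∀ n : ℤ, Module.Projective A (P.X n))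
    (hfin : ∀ n : ℤ, Module.Finite A (P.X n))
    (hmin : ∀ n : ℤ, ∀ x : P.X n, P.d n (n + 1) x ∈ radSubmodule A (P.X (n + 1))) :
    ∀ φ : Fin l → CategoryTheory.End P,
      (∀ i, Nonempty (Homotopy (φ i : P ⟶ P) 0)) → (List.ofFn φ).prod = 0 :=
  stmt_16_general A l hl P hmin
end

section
/- Let A be a finite-dimensional algebra, M an indecomposable A-module with minimal projective resolution P• → M, and m ≥ 1. Then the brutal truncation τ^{≥−m}P• (the complex P^{-m} → ⋯ → P^{-1} → P^0 placed in degrees −m,…,0) is homotopically minimal and indecomposable in the category of bounded complexes of projective modules. -/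
/-!
The differentials of `Q = τ^{≥-m}P•` are those of `P•`, hence radical. A decomposition
`Q ≅ U ⊞ V` gives complementary chain idempotents of `Q`; as `M = Q⁰ / im d⁻¹`, in degree 0
they split `M`, so one of them, say the one onto `U`, maps `Q⁰` into
`im d⁻¹ ⊆ rad Q⁰`. Nakayama's lemma then kills `U⁰`. Downwards, once `Uⁿ = 0` the inclusion
`Uⁿ⁻¹ → Qⁿ⁻¹` lands in `ker dⁿ⁻¹`, which is `im dⁿ⁻²` of the resolution, hence radical, even in
the lowest degree `-m`; Nakayama kills `Uⁿ⁻¹`.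
-/

open CategoryTheory CategoryTheory.Limits

section Radical

variable {A : Type} [Ring A] {M N : Type} [AddCommGroup M] [Module A M] [AddCommGroup N]
  [Module A N]

theorem CategoryTheory.Retract.r_i_apply {W X : ModuleCat.{0} A} (h : Retract W X) (w : W) :
    h.r (h.i w) = w := by
  rw [← ConcreteCategory.comp_apply, h.retract, ConcreteCategory.id_apply]

theorem CategoryTheory.Retract.range_i_hom_le {W X : ModuleCat.{0} A} (h : Retract W X) :
    LinearMap.range h.i.hom ≤ LinearMap.range (h.r ≫ h.i).hom := by
  rintro _ ⟨w, rfl⟩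
  exact ⟨h.i w, by simp [h.r_i_apply]⟩

theorem radSubmodule_map_le (f : M →ₗ[A] N) :
    (radSubmodule A M).map f ≤ radSubmodule A N := by
  rw [radSubmodule, Submodule.map_smul'']
  exact Submodule.smul_mono le_rfl le_top

theorem map_mem_radSubmodule (f : M →ₗ[A] N) {x : M} (hx : x ∈ radSubmodule A M) :
    f x ∈ radSubmodule A N :=
  radSubmodule_map_le f (Submodule.mem_map_of_mem hx)

theorem subsingleton_of_top_le_radSubmodule [Module.Finite A M]
    (h : ⊤ ≤ radSubmodule A M) : Subsingleton M := by
  rw [radSubmodule, Ideal.jacobson_bot] at h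
  have htop : (⊤ : Submodule A M) = ⊥ := Module.Finite.fg_top.eq_bot_of_le_jacobson_smul h
  exact (Submodule.subsingleton_iff A).mp (subsingleton_iff_bot_eq_top.mp htop.symm)

theorem isZero_of_retract_of_range_le_radSubmodule {W X : ModuleCat.{0} A} (h : Retract W X)
    [Module.Finite A X] (hr : LinearMap.range h.i.hom ≤ radSubmodule A X) : IsZero W := by
  have : Module.Finite A W := Module.Finite.of_surjective (R := A) h.r.hom
    (fun w => ⟨h.i w, h.r_i_apply w⟩)
  rw [ModuleCat.isZero_iff_subsingleton]
  refine subsingleton_of_top_le_radSubmodule (A := A) fun w _ => ?_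
  simpa [h.r_i_apply] using map_mem_radSubmodule h.r.hom (hr ⟨w, rfl⟩)

theorem le_radSubmodule_of_isZero {X : ModuleCat.{0} A} (hX : IsZero X) (N : Submodule A X) :
    N ≤ radSubmodule A X := by
  have := ModuleCat.subsingleton_of_isZero hX
  intro x _
  rw [Subsingleton.elim x 0]
  exact zero_mem _

end Radical

section Transport

variable {A : Type} [Ring A] {X Y X' Y' : ModuleCat.{0} A} (α : X ≅ X') (β : Y ≅ Y')
  {f : X ⟶ Y} {f' : X' ⟶ Y'}

theorem range_le_radSubmodule_of_comm_sq (w : α.hom ≫ f' = f ≫ β.hom)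
    (hf' : LinearMap.range f'.hom ≤ radSubmodule A Y') :
    LinearMap.range f.hom ≤ radSubmodule A Y := by
  have hf : f = α.hom ≫ f' ≫ β.inv := by rw [reassoc_of% w]; simp
  rintro _ ⟨x, rfl⟩
  rw [hf]
  exact map_mem_radSubmodule β.inv.hom (hf' ⟨α.hom x, rfl⟩)

theorem ker_le_radSubmodule_of_comm_sq (w : α.hom ≫ f' = f ≫ β.hom)
    (hf' : LinearMap.ker f'.hom ≤ radSubmodule A X') :
    LinearMap.ker f.hom ≤ radSubmodule A X := by
  intro x hx
  have hαx : α.hom x ∈ LinearMap.ker f'.hom := by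
    change (α.hom ≫ f') x = 0
    rw [w]
    simp [LinearMap.mem_ker.mp hx]
  simpa using map_mem_radSubmodule α.inv.hom (hf' hαx)

theorem ker_comp_eq_range_of_comm_sq (w : α.hom ≫ f' = f ≫ β.hom) {M : ModuleCat.{0} A}
    {ε : Y' ⟶ M} (h : LinearMap.range f'.hom = LinearMap.ker ε.hom) :
    LinearMap.ker (β.hom ≫ ε).hom = LinearMap.range f.hom := by
  have hf' : f' = α.inv ≫ f ≫ β.hom := by rw [← w]; simp
  have hα : LinearMap.range α.inv.hom = ⊤ :=
    LinearMap.range_eq_top.mpr (fun x => ⟨α.hom x, by simp⟩)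
  have hβ : Function.Injective β.hom :=
    fun y y' hy => by simpa using congrArg β.inv.hom hy
  rw [ModuleCat.hom_comp, LinearMap.ker_comp, ← h, hf', ModuleCat.hom_comp, ModuleCat.hom_comp,
    LinearMap.range_comp, hα, Submodule.map_top, LinearMap.range_comp,
    Submodule.comap_map_eq_of_injective hβ]

end Transport

section Indecomposable

variable {A : Type} [Ring A]

theorem eq_bot_or_eq_bot_of_isCompl {M : ModuleCat.{0} A}
    (hM : ∀ N N' : ModuleCat.{0} A, Nonempty (M ≅ N ⊞ N') → IsZero N ∨ IsZero N')
    {N N' : Submodule A M} (h : IsCompl N N') : N = ⊥ ∨ N' = ⊥ := by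
  have e : M ≅ ModuleCat.of A N ⊞ ModuleCat.of A N' :=
    (Submodule.prodEquivOfIsCompl N N' h).symm.toModuleIso ≪≫
      (ModuleCat.biprodIsoProd (ModuleCat.of A N) (ModuleCat.of A N')).symm
  simpa only [ModuleCat.isZero_iff_subsingleton, Submodule.subsingleton_iff_eq_bot]
    using hM _ _ ⟨e⟩

theorem isCompl_range_comp_of_isIdempotentElem {R X Y : Type*} [Ring R] [AddCommGroup X]
    [Module R X] [AddCommGroup Y] [Module R Y] {f : X →ₗ[R] Y} (hf : Function.Surjective f)
    {p : Module.End R X} (hp : IsIdempotentElem p) (hker : LinearMap.ker f ∈ p.invtSubmodule) :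
    IsCompl (LinearMap.range (f ∘ₗ p)) (LinearMap.range (f ∘ₗ (1 - p))) := by
  constructor
  · rw [Submodule.disjoint_def]
    rintro _ ⟨a, rfl⟩ ⟨b, hb⟩
    have hpp : p * (1 - p) = 0 := by rw [mul_sub, mul_one, hp.eq, sub_self]
    have hdiff : p a - (1 - p) b ∈ LinearMap.ker f := by
      simp only [LinearMap.mem_ker, map_sub]
      simpa [sub_eq_zero] using hb.symm
    have : p (p a - (1 - p) b) ∈ LinearMap.ker f := hker hdiff
    rw [map_sub, ← Module.End.mul_apply, ← Module.End.mul_apply, hp.eq, hpp] at this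
    simpa using this
  · rw [codisjoint_iff, eq_top_iff]
    rintro y -
    obtain ⟨x, rfl⟩ := hf y
    have : f x = f (p x) + f ((1 - p) x) := by simp
    rw [this]
    exact Submodule.add_mem_sup ⟨x, rfl⟩ ⟨x, rfl⟩

theorem range_le_ker_or_range_one_sub_le_ker {M : ModuleCat.{0} A}
    (hM : ∀ N N' : ModuleCat.{0} A, Nonempty (M ≅ N ⊞ N') → IsZero N ∨ IsZero N')
    {X : Type} [AddCommGroup X] [Module A X] {f : X →ₗ[A] M} (hf : Function.Surjective f)
    {p : Module.End A X} (hp : IsIdempotentElem p) (hker : LinearMap.ker f ∈ p.invtSubmodule) :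
    LinearMap.range p ≤ LinearMap.ker f ∨ LinearMap.range (1 - p) ≤ LinearMap.ker f := by
  simpa only [LinearMap.range_eq_bot, LinearMap.range_le_ker_iff] using
    eq_bot_or_eq_bot_of_isCompl hM (isCompl_range_comp_of_isIdempotentElem hf hp hker)

end Indecomposable

section Complexes

variable {A : Type} [Ring A]

theorem range_d_mem_invtSubmodule {K : CochainComplex (ModuleCat.{0} A) ℤ} (π : K ⟶ K)
    (i j : ℤ) : LinearMap.range (K.d i j).hom ∈ Module.End.invtSubmodule (π.f j).hom := by
  rintro _ ⟨x, rfl⟩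
  refine ⟨π.f i x, ?_⟩
  change (π.f i ≫ K.d i j) x = (K.d i j ≫ π.f j) x
  rw [π.comm]

theorem isZero_of_retract_of_ker_d_le_radSubmodule {W Q : CochainComplex (ModuleCat.{0} A) ℤ}
    (h : Retract W Q) (hfin : ∀ n, Module.Finite A (Q.X n))
    (hpos : ∀ n, 0 < n → IsZero (Q.X n))
    (hker : ∀ n < 0, LinearMap.ker (Q.d n (n + 1)).hom ≤ radSubmodule A (Q.X n))
    (h0 : LinearMap.range (h.i.f 0).hom ≤ radSubmodule A (Q.X 0)) : IsZero W := by
  let hX (n : ℤ) : Retract (W.X n) (Q.X n) := h.map (HomologicalComplex.eval _ _ n)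
  have hnonpos : ∀ n ≤ 0, IsZero (W.X n) := by
    refine Int.leInductionDown (isZero_of_retract_of_range_le_radSubmodule (hX 0) h0) ?_
    rintro n hn hWn
    refine isZero_of_retract_of_range_le_radSubmodule (hX (n - 1)) ?_
    rintro _ ⟨w, rfl⟩
    refine hker (n - 1) (by omega) ?_
    have hWn' : IsZero (W.X (n - 1 + 1)) := by rwa [sub_add_cancel]
    change Q.d (n - 1) (n - 1 + 1) (h.i.f (n - 1) w) = 0
    rw [← ConcreteCategory.comp_apply, h.i.comm, hWn'.eq_of_tgt (W.d _ _) 0]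
    simp
  rw [IsZero.iff_id_eq_zero]
  ext n : 1
  by_cases hn : n ≤ 0
  · exact (hnonpos n hn).eq_of_src _ _
  · exact (IsZero.of_mono (hX n).i (hpos n (by omega))).eq_of_src _ _

theorem isZero_or_isZero_of_iso_biprod {Q U V : CochainComplex (ModuleCat.{0} A) ℤ}
    (e : Q ≅ U ⊞ V) (hfin : ∀ n, Module.Finite A (Q.X n))
    (hpos : ∀ n, 0 < n → IsZero (Q.X n))
    (hker : ∀ n < 0, LinearMap.ker (Q.d n (n + 1)).hom ≤ radSubmodule A (Q.X n))
    (hd : LinearMap.range (Q.d (-1) 0).hom ≤ radSubmodule A (Q.X 0)) {M : ModuleCat.{0} A}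
    (hM : ∀ N N' : ModuleCat.{0} A, Nonempty (M ≅ N ⊞ N') → IsZero N ∨ IsZero N')
    {θ : Q.X 0 ⟶ M} (hθ : Function.Surjective θ)
    (hθker : LinearMap.ker θ.hom = LinearMap.range (Q.d (-1) 0).hom) : IsZero U ∨ IsZero V := by
  let hU : Retract U Q := (BinaryBiproduct.bicone U V).retract_left.trans (.ofIso e.symm)
  let hV : Retract V Q := (BinaryBiproduct.bicone U V).retract_right.trans (.ofIso e.symm)
  have hidem : IsIdempotentElem ((hU.r ≫ hU.i).f 0).hom := by
    rw [IsIdempotentElem, Module.End.mul_eq_comp, ← ModuleCat.hom_comp,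
      ← HomologicalComplex.comp_f]
    simp
  have htotal : hU.r ≫ hU.i + hV.r ≫ hV.i = 𝟙 Q := by
    change e.hom ≫ biprod.fst ≫ biprod.inl ≫ e.inv + e.hom ≫ biprod.snd ≫ biprod.inr ≫ e.inv = _
    rw [← Preadditive.comp_add, ← Category.assoc biprod.fst, ← Category.assoc biprod.snd,
      ← Preadditive.add_comp, biprod.total, Category.id_comp, e.hom_inv_id]
  have hsum : 1 - ((hU.r ≫ hU.i).f 0).hom = ((hV.r ≫ hV.i).f 0).hom := by
    rw [sub_eq_iff_eq_add', ← ModuleCat.hom_add, ← HomologicalComplex.add_f_apply, htotal]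
    rfl
  have key {W : CochainComplex (ModuleCat.{0} A) ℤ} (h : Retract W Q)
      (hW : LinearMap.range ((h.r ≫ h.i).f 0).hom ≤ LinearMap.ker θ.hom) : IsZero W :=
    isZero_of_retract_of_ker_d_le_radSubmodule h hfin hpos hker <|
      (h.map (HomologicalComplex.eval _ _ 0)).range_i_hom_le.trans (hW.trans (hθker ▸ hd))
  rcases range_le_ker_or_range_one_sub_le_ker hM hθ hidem
    (hθker ▸ range_d_mem_invtSubmodule _ _ _) with h | h
  · exact .inl (key hU h)
  · exact .inr (key hV (hsum ▸ h))

end Complexes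

section Truncation

variable {A : Type} [Ring A]

theorem ker_d_le_radSubmodule_of_range_eq_ker {P : CochainComplex (ModuleCat.{0} A) ℤ}
    (hex : ∀ n : ℤ, n < 0 →
      LinearMap.range (P.d (n - 1) n).hom = LinearMap.ker (P.d n (n + 1)).hom)
    (hmin : ∀ n : ℤ, ∀ x : P.X n, P.d n (n + 1) x ∈ radSubmodule A (P.X (n + 1))) :
    ∀ n < 0, LinearMap.ker (P.d n (n + 1)).hom ≤ radSubmodule A (P.X n) := by
  intro n hn
  have hmin' := hmin (n - 1)
  rw [sub_add_cancel] at hmin'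
  rw [← hex n hn]
  rintro _ ⟨x, rfl⟩
  exact hmin' x

theorem truncation_range_d_le_radSubmodule {P Q : CochainComplex (ModuleCat.{0} A) ℤ} {m : ℕ}
    (hQz : ∀ n : ℤ, (n < -(m : ℤ) ∨ 0 < n) → IsZero (Q.X n))
    (hPQ : ∀ n : ℤ, -(m : ℤ) ≤ n → n < 0 → ∃ (α : Q.X n ≅ P.X n) (β : Q.X (n + 1) ≅ P.X (n + 1)),
      α.hom ≫ P.d n (n + 1) = Q.d n (n + 1) ≫ β.hom)
    (hP : ∀ n : ℤ, LinearMap.range (P.d n (n + 1)).hom ≤ radSubmodule A (P.X (n + 1)))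
    (n : ℤ) : LinearMap.range (Q.d n (n + 1)).hom ≤ radSubmodule A (Q.X (n + 1)) := by
  rcases lt_or_ge n (-(m : ℤ)) with h₁ | h₁
  · rw [(hQz n (.inl h₁)).eq_of_src (Q.d n (n + 1)) 0, ModuleCat.hom_zero, LinearMap.range_zero]
    exact bot_le
  rcases lt_or_ge n 0 with h₂ | h₂
  · obtain ⟨α, β, w⟩ := hPQ n h₁ h₂
    exact range_le_radSubmodule_of_comm_sq α β w (hP n)
  · exact le_radSubmodule_of_isZero (hQz (n + 1) (.inr (by omega))) _

theorem truncation_ker_d_le_radSubmodule {P Q : CochainComplex (ModuleCat.{0} A) ℤ} {m : ℕ}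
    (hQz : ∀ n : ℤ, (n < -(m : ℤ) ∨ 0 < n) → IsZero (Q.X n))
    (hPQ : ∀ n : ℤ, -(m : ℤ) ≤ n → n < 0 → ∃ (α : Q.X n ≅ P.X n) (β : Q.X (n + 1) ≅ P.X (n + 1)),
      α.hom ≫ P.d n (n + 1) = Q.d n (n + 1) ≫ β.hom)
    (hP : ∀ n < 0, LinearMap.ker (P.d n (n + 1)).hom ≤ radSubmodule A (P.X n)) :
    ∀ n < 0, LinearMap.ker (Q.d n (n + 1)).hom ≤ radSubmodule A (Q.X n) := by
  intro n hn
  rcases lt_or_ge n (-(m : ℤ)) with h₁ | h₁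
  · exact le_radSubmodule_of_isZero (hQz n (.inl h₁)) _
  · obtain ⟨α, β, w⟩ := hPQ n h₁ hn
    exact ker_le_radSubmodule_of_comm_sq α β w (hP n hn)

end Truncation

/-- Let `A` be a finite-dimensional algebra, `M` an indecomposable finite-dimensional
`A`-module, and `P• → M` a minimal projective resolution (`P•` a complex of finitely
generated projective modules concentrated in degrees `≤ 0`, exact in negative degrees,
with all differentials factoring through radicals, together with an augmentation
`ε : P⁰ → M` which is surjective with kernel the image of `d⁻¹`). Then for any `m ≥ 1`,
the brutal truncation `τ^{≥-m}P•` (a complex `Q` which agrees with `P•` in degrees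
`-m ≤ n ≤ 0` and vanishes elsewhere) is homotopically minimal (its differentials factor
through radicals) and indecomposable in the category of bounded complexes of projective
modules. -/
theorem stmt_18 (A : Type) [Ring A]
    (M : ModuleCat.{0} A)
    (hMindec : ∀ N N' : ModuleCat.{0} A, Nonempty (M ≅ N ⊞ N') → IsZero N ∨ IsZero N')
    (P : CochainComplex (ModuleCat.{0} A) ℤ)
    (hfin : ∀ n : ℤ, Module.Finite A (P.X n))
    (ε : P.X 0 ⟶ M) (hε : Function.Surjective ε)
    (hex0 : LinearMap.range (P.d (-1) 0).hom = LinearMap.ker ε.hom)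
    (hex : ∀ n : ℤ, n < 0 → LinearMap.range (P.d (n - 1) n).hom = LinearMap.ker (P.d n (n + 1)).hom)
    (hmin : ∀ n : ℤ, ∀ x : P.X n, P.d n (n + 1) x ∈ radSubmodule A (P.X (n + 1)))
    (m : ℕ) (hm : 1 ≤ m)
    -- `Q` is the brutal truncation `τ^{≥ -m} P•`:
    (Q : CochainComplex (ModuleCat.{0} A) ℤ)
    (hQz : ∀ n : ℤ, (n < -(m : ℤ) ∨ 0 < n) → IsZero (Q.X n))
    (φ : ∀ n : ℤ, -(m : ℤ) ≤ n → n ≤ 0 → (Q.X n ≅ P.X n))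
    (hφ : ∀ n : ℤ, ∀ (h₁ : -(m : ℤ) ≤ n) (h₂ : n + 1 ≤ 0),
      (φ n h₁ (by omega)).hom ≫ P.d n (n + 1) =
        Q.d n (n + 1) ≫ (φ (n + 1) (by omega) h₂).hom) :
    (∀ n : ℤ, ∀ x : Q.X n, Q.d n (n + 1) x ∈ radSubmodule A (Q.X (n + 1))) ∧
    (∀ U V : CochainComplex (ModuleCat.{0} A) ℤ,
      Nonempty (Q ≅ U ⊞ V) → IsZero U ∨ IsZero V) := by
  have hPQ (n : ℤ) (h₁ : -(m : ℤ) ≤ n) (h₂ : n < 0) : ∃ (α : Q.X n ≅ P.X n)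
      (β : Q.X (n + 1) ≅ P.X (n + 1)), α.hom ≫ P.d n (n + 1) = Q.d n (n + 1) ≫ β.hom :=
    ⟨φ n h₁ h₂.le, φ (n + 1) (by omega) h₂, hφ n h₁ h₂⟩
  have hQd := truncation_range_d_le_radSubmodule hQz hPQ
    (fun n => by rintro _ ⟨x, rfl⟩; exact hmin n x)
  refine ⟨fun n x => hQd n ⟨x, rfl⟩, fun U V ⟨e⟩ => ?_⟩
  have hQfin (n : ℤ) : Module.Finite A (Q.X n) := by
    by_cases hn : -(m : ℤ) ≤ n ∧ n ≤ 0
    · exact Module.Finite.equiv (φ n hn.1 hn.2).symm.toLinearEquiv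
    · have := ModuleCat.subsingleton_of_isZero (hQz n (by omega))
      infer_instance
  have h0 : -(m : ℤ) ≤ 0 := by omega
  have h1 : -(m : ℤ) ≤ -1 := by omega
  exact isZero_or_isZero_of_iso_biprod e hQfin (fun n hn => hQz n (.inr hn))
    (truncation_ker_d_le_radSubmodule hQz hPQ (ker_d_le_radSubmodule_of_range_eq_ker hex hmin))
    (hQd (-1)) hMindec (θ := (φ 0 h0 le_rfl).hom ≫ ε)
    (hε.comp (φ 0 h0 le_rfl).toLinearEquiv.surjective)
    (ker_comp_eq_range_of_comm_sq _ _ (hφ (-1) h1 le_rfl) hex0)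
end
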